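/- arXiv:2003.13587 — 3 statements merged into one kernel-verified Lean document; each statement's English description precedes it below -/
import Mathlib

section
/- Let F : [0,∞) → ℝ be such that t ↦ F(√t) is strictly concave on (0,∞) (this holds when F(t)=∫₀ᵗ f with f(s)/s strictly decreasing on (0,∞)). Then for any measurable nonnegative functions a, b on Ω with a² ≠ b² on a set of positive measure, the map t ↦ ∫_Ω F(√((1-t)a² + t b²)) is strictly concave on [0,1]. -/
/-!
Writing `G t = F (√t)`, the integrand at `t` is `G` evaluated on the segment from `a x ^ 2` to
`b x ^ 2`, so for each `x` it is a concave function of `t`, strictly concave when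
`a x ^ 2 ≠ b x ^ 2`. Concavity of `G` passes from `(0, ∞)` to `[0, ∞)` by continuity, and
strictness survives because open segments between points of `[0, ∞)` stay in `(0, ∞)`.
Integrating, the Jensen gap is a nonnegative function that is positive on a set of positive
measure, hence has positive integral.
-/

open MeasureTheory Set

section Convexity

variable {E : Type*} [AddCommGroup E] [Module ℝ E]

theorem ConcaveOn.closure_of_continuousOn [TopologicalSpace E] [IsTopologicalAddGroup E]
    [ContinuousSMul ℝ E] {s : Set E} {f : E → ℝ} (hf : ConcaveOn ℝ s f)
    (hcont : ContinuousOn f (closure s)) : ConcaveOn ℝ (closure s) f := by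
  refine ⟨hf.1.closure, fun x hx y hy α β hα hβ hαβ => ?_⟩
  have hcomb : MapsTo (fun p : E × E => α • p.1 + β • p.2) (closure s ×ˢ closure s) (closure s) :=
    fun p hp => hf.1.closure hp.1 hp.2 hα hβ hαβ
  have hle := le_on_closure (s := s ×ˢ s) (f := fun p : E × E => α • f p.1 + β • f p.2)
    (g := fun p : E × E => f (α • p.1 + β • p.2)) (fun p hp => hf.2 hp.1 hp.2 hα hβ hαβ)
  rw [closure_prod_eq] at hle
  refine hle (x := (x, y)) ?_ ?_ ⟨hx, hy⟩
  · exact ((hcont.comp continuousOn_fst fun p hp => hp.1).const_smul α).add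
      ((hcont.comp continuousOn_snd fun p hp => hp.2).const_smul β)
  · exact hcont.comp (by fun_prop) hcomb

/-- Compare `f` at the two midpoints `(x + z) / 2` and `(z + y) / 2`, whose `(α, β)`-combination
is again `z = α • x + β • y`. -/
theorem ConcaveOn.strictConcaveOn_of_openSegment_subset {s t : Set E} {f : E → ℝ}
    (hf : ConcaveOn ℝ s f) (hft : StrictConcaveOn ℝ t f)
    (hst : ∀ x ∈ s, ∀ y ∈ s, x ≠ y → openSegment ℝ x y ⊆ t) : StrictConcaveOn ℝ s f := by
  refine ⟨hf.1, fun x hx y hy hxy α β hα hβ hαβ => ?_⟩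
  obtain rfl : β = 1 - α := by linarith
  set z := α • x + (1 - α) • y
  have hz : z ∈ s := hf.1 hx hy hα.le hβ.le hαβ
  have hx' : (1 / 2 : ℝ) • x + (1 / 2 : ℝ) • z ∈ t :=
    hst x hx y hy hxy ⟨(1 + α) / 2, (1 - α) / 2, by positivity, by linarith, by ring, by
      simp only [z]; module⟩
  have hy' : (1 / 2 : ℝ) • z + (1 / 2 : ℝ) • y ∈ t :=
    hst x hx y hy hxy ⟨α / 2, (2 - α) / 2, by positivity, by linarith, by ring, by
      simp only [z]; module⟩
  have hne : (1 / 2 : ℝ) • x + (1 / 2 : ℝ) • z ≠ (1 / 2 : ℝ) • z + (1 / 2 : ℝ) • y := by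
    rw [Ne, ← sub_eq_zero, show (1 / 2 : ℝ) • x + (1 / 2 : ℝ) • z - ((1 / 2 : ℝ) • z
      + (1 / 2 : ℝ) • y) = (1 / 2 : ℝ) • (x - y) by module, smul_eq_zero, sub_eq_zero]
    norm_num [hxy]
  have hcomb : α • ((1 / 2 : ℝ) • x + (1 / 2 : ℝ) • z)
      + (1 - α) • ((1 / 2 : ℝ) • z + (1 / 2 : ℝ) • y) = z := by
    simp only [z]; module
  have hstrict := hft.2 hx' hy' hne hα hβ hαβ
  have hhalf : (0 : ℝ) ≤ 1 / 2 := by norm_num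
  have hleft := hf.2 hx hz hhalf hhalf (by norm_num)
  have hright := hf.2 hz hy hhalf hhalf (by norm_num)
  rw [hcomb] at hstrict
  simp only [smul_eq_mul] at hstrict hleft hright ⊢
  nlinarith

theorem StrictConcaveOn.comp_affineMap {F : Type*} [AddCommGroup F] [Module ℝ F] {s : Set F}
    {f : F → ℝ} (hf : StrictConcaveOn ℝ s f) {g : E →ᵃ[ℝ] F} (hg : Function.Injective g) :
    StrictConcaveOn ℝ (g ⁻¹' s) (f ∘ g) :=
  ⟨hf.1.affine_preimage g, fun x hx y hy hxy α β hα hβ hαβ => by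
    simpa only [Function.comp_apply, Convex.combo_affine_apply hαβ]
      using hf.2 hx hy (hg.ne hxy) hα hβ hαβ⟩

theorem ConcaveOn.comp_lineMap {s : Set E} {f : E → ℝ} (hf : ConcaveOn ℝ s f) {u v : E}
    (hu : u ∈ s) (hv : v ∈ s) :
    ConcaveOn ℝ (Icc (0 : ℝ) 1) (fun t => f (AffineMap.lineMap u v t)) :=
  (hf.comp_affineMap (AffineMap.lineMap u v)).subset (fun _ ht => hf.1.lineMap_mem hu hv ht)
    (convex_Icc 0 1)

theorem StrictConcaveOn.comp_lineMap {s : Set E} {f : E → ℝ} (hf : StrictConcaveOn ℝ s f)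
    {u v : E} (hu : u ∈ s) (hv : v ∈ s) (huv : u ≠ v) :
    StrictConcaveOn ℝ (Icc (0 : ℝ) 1) (fun t => f (AffineMap.lineMap u v t)) :=
  (hf.comp_affineMap (AffineMap.lineMap_injective ℝ huv)).subset
    (fun _ ht => hf.1.lineMap_mem hu hv ht) (convex_Icc 0 1)

end Convexity

theorem StrictConcaveOn.Ici_of_continuousOn {f : ℝ → ℝ} {c : ℝ}
    (hf : StrictConcaveOn ℝ (Ioi c) f) (hcont : ContinuousOn f (Ici c)) :
    StrictConcaveOn ℝ (Ici c) f := by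
  rw [← closure_Ioi] at hcont ⊢
  refine (hf.concaveOn.closure_of_continuousOn hcont).strictConcaveOn_of_openSegment_subset hf
    fun x hx y hy hxy z hz => ?_
  rw [closure_Ioi] at hx hy
  rw [openSegment_eq_Ioo' hxy] at hz
  exact (le_min hx hy).trans_lt hz.1

theorem strictConcaveOn_integral {E X : Type*} [AddCommGroup E] [Module ℝ E] [MeasurableSpace X]
    {μ : Measure X} {s : Set E} {g : E → X → ℝ} {A : Set X} (hA : 0 < μ A)
    (hint : ∀ t ∈ s, Integrable (g t) μ) (hconc : ∀ x, ConcaveOn ℝ s (g · x))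
    (hstrict : ∀ x ∈ A, StrictConcaveOn ℝ s (g · x)) :
    StrictConcaveOn ℝ s (fun t => ∫ x, g t x ∂μ) := by
  obtain ⟨x₀, hx₀⟩ := nonempty_of_measure_ne_zero hA.ne'
  refine ⟨(hstrict x₀ hx₀).1, fun p hp q hq hpq α β hα hβ hαβ => ?_⟩
  have hr : α • p + β • q ∈ s := (hstrict x₀ hx₀).1 hp hq hα.le hβ.le hαβ
  set gap : X → ℝ := fun x => g (α • p + β • q) x - (α * g p x + β * g q x)
  have hgap_nonneg : 0 ≤ gap := fun x =>
    sub_nonneg.2 (by simpa only [smul_eq_mul] using (hconc x).2 hp hq hα.le hβ.le hαβ)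
  have hgap_pos : A ⊆ Function.support gap := fun x hx =>
    (sub_pos.2 (by simpa only [smul_eq_mul] using (hstrict x hx).2 hp hq hpq hα hβ hαβ)).ne'
  have hp_int := (hint p hp).const_mul α
  have hq_int := (hint q hq).const_mul β
  have hcomb_int : Integrable (fun x => α * g p x + β * g q x) μ := hp_int.add hq_int
  have hgap_int : Integrable gap μ := (hint _ hr).sub hcomb_int
  have hpos : 0 < ∫ x, gap x ∂μ :=
    (integral_pos_iff_support_of_nonneg hgap_nonneg hgap_int).2
      (hA.trans_le (measure_mono hgap_pos))
  have hgap_eq : ∫ x, gap x ∂μ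
      = ∫ x, g (α • p + β • q) x ∂μ - (α * ∫ x, g p x ∂μ + β * ∫ x, g q x ∂μ) := by
    rw [integral_sub (hint _ hr) hcomb_int, integral_add hp_int hq_int,
      integral_const_mul, integral_const_mul]
  simp only [smul_eq_mul]
  linarith

theorem integral_strictly_concave_along_squares_general
    {X : Type*} [MeasurableSpace X] (μ : Measure X)
    (a b : X → ℝ)
    (F : ℝ → ℝ) (hFcont : ContinuousOn F (Set.Ici (0:ℝ)))
    (hFconc : StrictConcaveOn ℝ (Set.Ioi (0:ℝ)) (fun t => F (Real.sqrt t)))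
    (hdiff : 0 < μ {x | (a x)^2 ≠ (b x)^2})
    (hint : ∀ t ∈ Set.Icc (0:ℝ) 1,
      Integrable (fun x => F (Real.sqrt ((1 - t) * (a x)^2 + t * (b x)^2))) μ) :
    StrictConcaveOn ℝ (Set.Icc (0:ℝ) 1)
      (fun t => ∫ x, F (Real.sqrt ((1 - t) * (a x)^2 + t * (b x)^2)) ∂μ) := by
  have hG : StrictConcaveOn ℝ (Ici 0) (fun t => F (Real.sqrt t)) :=
    hFconc.Ici_of_continuousOn
      (hFcont.comp Real.continuous_sqrt.continuousOn fun t _ => Real.sqrt_nonneg t)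
  refine strictConcaveOn_integral hdiff hint (fun x => ?_) (fun x hx => ?_)
  · simpa only [AffineMap.lineMap_apply_ring]
      using hG.concaveOn.comp_lineMap (sq_nonneg (a x)) (sq_nonneg (b x))
  · simpa only [AffineMap.lineMap_apply_ring]
      using hG.comp_lineMap (sq_nonneg (a x)) (sq_nonneg (b x)) hx

theorem integral_strictly_concave_along_squares
    {X : Type*} [MeasurableSpace X] (μ : Measure X) [IsFiniteMeasure μ]
    (a b : X → ℝ) (ha : Measurable a) (hb : Measurable b)
    (hapos : ∀ x, 0 ≤ a x) (hbpos : ∀ x, 0 ≤ b x)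
    (habdd : ∃ M : ℝ, ∀ x, a x ≤ M ∧ b x ≤ M)
    (F : ℝ → ℝ) (hFcont : ContinuousOn F (Set.Ici (0:ℝ)))
    (hFconc : StrictConcaveOn ℝ (Set.Ioi (0:ℝ)) (fun t => F (Real.sqrt t)))
    (hdiff : 0 < μ {x | (a x)^2 ≠ (b x)^2})
    (hint : ∀ t ∈ Set.Icc (0:ℝ) 1,
      Integrable (fun x => F (Real.sqrt ((1 - t) * (a x)^2 + t * (b x)^2))) μ) :
    StrictConcaveOn ℝ (Set.Icc (0:ℝ) 1)
      (fun t => ∫ x, F (Real.sqrt ((1 - t) * (a x)^2 + t * (b x)^2)) ∂μ) :=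
  integral_strictly_concave_along_squares_general μ a b F hFcont hFconc hdiff hint
end

section
/- Let Ω = (0,π)² and φ_α(x,y) = cos(α)·sin(x)·sin(2y) + sin(α)·sin(2x)·sin(y). Then ∫_Ω φ_α⁴ dx dy = (3π²/256)·(13 - cos(4α)). -/
/-!
Since `sin 2t = 2 sin t cos t`, `φ_α(x, y) = 2 sin x sin y (cos α cos y + sin α cos x)`. Hence for
fixed `x` the integrand is `sin⁴ y` times a quartic polynomial in `cos y`, and the inner integral is
again `sin⁴ x` times a quartic polynomial in `cos x`. Both integrals therefore reduce to the moments
`∫₀^π sin⁴ t cosᵏ t`: the odd ones vanish (substitute `u = sin t`), and for the even ones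
`cos² = 1 - sin²` leaves the Wallis integrals of `sin⁴`, `sin⁶`, `sin⁸`.
-/

open Real intervalIntegral

lemma integral_sin_pow_four : ∫ x in (0:ℝ)..π, sin x ^ 4 = 3 * π / 8 := by
  have := integral_sin_pow_even (n := 2)
  norm_num [Finset.prod_range_succ] at this
  linarith

lemma integral_sin_pow_six : ∫ x in (0:ℝ)..π, sin x ^ 6 = 5 * π / 16 := by
  have := integral_sin_pow_even (n := 3)
  norm_num [Finset.prod_range_succ] at this
  linarith

lemma integral_sin_pow_eight : ∫ x in (0:ℝ)..π, sin x ^ 8 = 35 * π / 128 := by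
  have := integral_sin_pow_even (n := 4)
  norm_num [Finset.prod_range_succ] at this
  linarith

lemma integral_sin_pow_mul_cos_pow_odd_eq_zero (m n : ℕ) :
    ∫ x in (0:ℝ)..π, sin x ^ m * cos x ^ (2 * n + 1) = 0 := by
  simp [integral_sin_pow_mul_cos_pow_odd]

lemma integral_sin_pow_four_mul_quartic_cos (p q r s t : ℝ) :
    ∫ x in (0:ℝ)..π, sin x ^ 4 * (p + q * cos x + r * cos x ^ 2 + s * cos x ^ 3 + t * cos x ^ 4)
      = 3 * π / 8 * p + π / 16 * r + 3 * π / 128 * t := by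
  -- the odd exponents stay in the shape `2 * n + 1` of `integral_sin_pow_mul_cos_pow_odd_eq_zero`
  have hexpand : ∀ x, sin x ^ 4 * (p + q * cos x + r * cos x ^ 2 + s * cos x ^ 3 + t * cos x ^ 4)
      = (p + r + t) * sin x ^ 4 - (r + 2 * t) * sin x ^ 6 + t * sin x ^ 8
        + q * (sin x ^ 4 * cos x ^ (2 * 0 + 1)) + s * (sin x ^ 4 * cos x ^ (2 * 1 + 1)) := by
    intro x
    linear_combination (sin x ^ 4 * (r + t * (cos x ^ 2 + 1 - sin x ^ 2))) * cos_sq' x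
  rw [integral_congr fun x _ => hexpand x, integral_add, integral_add, integral_add, integral_sub]
  · simp only [integral_const_mul, integral_sin_pow_four, integral_sin_pow_six,
      integral_sin_pow_eight, integral_sin_pow_mul_cos_pow_odd_eq_zero]
    ring
  all_goals apply Continuous.intervalIntegrable; fun_prop

theorem square_eigenfunction_L4_norm
    (α : ℝ) :
    (∫ x in (0:ℝ)..π, ∫ y in (0:ℝ)..π,
        (cos α * sin x * sin (2*y) + sin α * sin (2*x) * sin y)^4)
      = (3 * π^2 / 256) * (13 - cos (4*α)) := by
  set c := cos α
  set s := sin α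
  have inner : ∀ x, ∫ y in (0:ℝ)..π, (c * sin x * sin (2*y) + s * sin (2*x) * sin y)^4
      = sin x ^ 4 * (3 * π / 8 * c ^ 4 + 0 * cos x + 6 * π * c ^ 2 * s ^ 2 * cos x ^ 2
          + 0 * cos x ^ 3 + 6 * π * s ^ 4 * cos x ^ 4) := by
    intro x
    have hfactor : ∀ y, (c * sin x * sin (2*y) + s * sin (2*x) * sin y)^4
        = 16 * sin x ^ 4 * (sin y ^ 4 * ((s * cos x) ^ 4 + 4 * c * (s * cos x) ^ 3 * cos y
          + 6 * c ^ 2 * (s * cos x) ^ 2 * cos y ^ 2 + 4 * c ^ 3 * (s * cos x) * cos y ^ 3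
          + c ^ 4 * cos y ^ 4)) := by
      intro y
      rw [sin_two_mul, sin_two_mul]
      ring
    simp only [hfactor, integral_const_mul, integral_sin_pow_four_mul_quartic_cos]
    ring
  simp only [inner, integral_sin_pow_four_mul_quartic_cos]
  rw [show 4 * α = 2 * (2 * α) by ring, cos_two_mul, cos_two_mul]
  linear_combination π ^ 2 / 64 * (15 * c ^ 2 + 9 * s ^ 2 + 9) * sin_sq_add_cos_sq α
end

section
/- With Ω = (0,π)², φ_α as above and σ(α) := (∫_Ω φ_α⁴)/(∫_Ω φ_α²), one has σ(α) = (3/64)·(13 - cos(4α)); in particular σ(0) = σ(π/2) = 9/16 and σ(π/4) = σ(3π/4) = 21/32, and σ attains its minimum over α ∈ ℝ exactly at α ∈ (π/4)·(2ℤ) ... i.e. at the multiples of π/2. -/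
/-!
Since `sin 2t = 2 sin t cos t`, `φ_α(x, y) = 2 sin x sin y (cos α cos y + sin α cos x)`, so by the
binomial theorem `φ_α ^ n` is a sum of products `f(x) g(y)` and its double integral is a combination
of products of the moments `∫₀^π sin^m t cos^k t dt`. Those with odd `k` vanish (substitute
`u = sin t`, which is `0` at both ends); the even ones reduce to Wallis' integrals through
`cos² = 1 - sin²`.
This gives `∫ φ_α² = π²/4` and `∫ φ_α⁴ = π² (9/64 (cos⁴α + sin⁴α) + 3/8 cos²α sin²α)`, hence
`σ(α) = 9/16 + 3/8 sin²α cos²α = 3/64 (13 - cos 4α)`, which is minimal exactly where `cos 4α = 1`.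
-/

open Real

noncomputable def sigmaRatio (α : ℝ) : ℝ :=
  (∫ x in (0:ℝ)..π, ∫ y in (0:ℝ)..π,
      (cos α * sin x * sin (2*y) + sin α * sin (2*x) * sin y)^4)
  / (∫ x in (0:ℝ)..π, ∫ y in (0:ℝ)..π,
      (cos α * sin x * sin (2*y) + sin α * sin (2*x) * sin y)^2)

open Finset intervalIntegral

noncomputable def sinCosMoment (m k : ℕ) : ℝ := ∫ x in (0:ℝ)..π, sin x ^ m * cos x ^ k

lemma sinCosMoment_of_odd (m : ℕ) {k : ℕ} (hk : Odd k) : sinCosMoment m k = 0 := by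
  obtain ⟨j, rfl⟩ := hk
  simp [sinCosMoment, integral_sin_pow_mul_cos_pow_odd]

lemma sinCosMoment_add_two (m k : ℕ) :
    sinCosMoment m (k + 2) = sinCosMoment m k - sinCosMoment (m + 2) k := by
  rw [sinCosMoment, sinCosMoment, sinCosMoment, ← integral_sub
    (Continuous.intervalIntegrable (by fun_prop) _ _)
    (Continuous.intervalIntegrable (by fun_prop) _ _)]
  refine integral_congr fun x _ => ?_
  simp only [cos_sq', pow_add]
  ring

lemma sinCosMoment_two_mul_zero (n : ℕ) :
    sinCosMoment (2 * n) 0 = π * ∏ i ∈ range n, (2 * (i : ℝ) + 1) / (2 * i + 2) := by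
  simpa [sinCosMoment] using integral_sin_pow_even (n := n)

lemma integral_sum_mul_sin_pow_mul_cos_pow {ι : Type*} (s : Finset ι) (c : ι → ℝ) (m : ℕ)
    (j : ι → ℕ) :
    ∫ x in (0:ℝ)..π, ∑ i ∈ s, c i * (sin x ^ m * cos x ^ j i)
      = ∑ i ∈ s, c i * sinCosMoment m (j i) := by
  rw [integral_finsetSum fun i _ => Continuous.intervalIntegrable (by fun_prop) _ _]
  exact sum_congr rfl fun i _ => integral_const_mul _ _

lemma integral_integral_pow_eq_sum (a b : ℝ) (n : ℕ) :
    (∫ x in (0:ℝ)..π, ∫ y in (0:ℝ)..π, (a * sin x * sin (2*y) + b * sin (2*x) * sin y) ^ n)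
      = ∑ k ∈ range (n + 1), 2 ^ n * n.choose k * a ^ k * b ^ (n - k)
          * sinCosMoment n (n - k) * sinCosMoment n k := by
  have hsplit : ∀ x y, (a * sin x * sin (2*y) + b * sin (2*x) * sin y) ^ n
      = ∑ k ∈ range (n + 1), (2 ^ n * n.choose k * a ^ k * b ^ (n - k)
          * (sin x ^ n * cos x ^ (n - k))) * (sin y ^ n * cos y ^ k) := by
    intro x y
    rw [sin_two_mul, sin_two_mul,
      show a * sin x * (2 * sin y * cos y) + b * (2 * sin x * cos x) * sin y
        = (2 * sin x * sin y) * (a * cos y + b * cos x) by ring, mul_pow, add_pow, mul_sum]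
    exact sum_congr rfl fun k _ => by ring
  have hinner : ∀ x, ∫ y in (0:ℝ)..π, (a * sin x * sin (2*y) + b * sin (2*x) * sin y) ^ n
      = ∑ k ∈ range (n + 1), (2 ^ n * n.choose k * a ^ k * b ^ (n - k) * sinCosMoment n k)
          * (sin x ^ n * cos x ^ (n - k)) := by
    intro x
    simp_rw [hsplit x]
    rw [integral_sum_mul_sin_pow_mul_cos_pow]
    exact sum_congr rfl fun k _ => by ring
  rw [integral_congr fun x _ => hinner x, integral_sum_mul_sin_pow_mul_cos_pow]
  exact sum_congr rfl fun k _ => by ring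

lemma sinCosMoment_two_zero : sinCosMoment 2 0 = π / 2 := by
  rw [show 2 = 2 * 1 from rfl, sinCosMoment_two_mul_zero]
  simp only [prod_range_succ, prod_range_zero]
  push_cast
  ring

lemma sinCosMoment_four_zero : sinCosMoment 4 0 = 3 * π / 8 := by
  rw [show 4 = 2 * 2 from rfl, sinCosMoment_two_mul_zero]
  simp only [prod_range_succ, prod_range_zero]
  push_cast
  ring

lemma sinCosMoment_six_zero : sinCosMoment 6 0 = 5 * π / 16 := by
  rw [show 6 = 2 * 3 from rfl, sinCosMoment_two_mul_zero]
  simp only [prod_range_succ, prod_range_zero]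
  push_cast
  ring

lemma sinCosMoment_eight_zero : sinCosMoment 8 0 = 35 * π / 128 := by
  rw [show 8 = 2 * 4 from rfl, sinCosMoment_two_mul_zero]
  simp only [prod_range_succ, prod_range_zero]
  push_cast
  ring

lemma sinCosMoment_two_two : sinCosMoment 2 2 = π / 8 := by
  rw [sinCosMoment_add_two, sinCosMoment_two_zero, sinCosMoment_four_zero]; ring

lemma sinCosMoment_four_two : sinCosMoment 4 2 = π / 16 := by
  rw [sinCosMoment_add_two, sinCosMoment_four_zero, sinCosMoment_six_zero]; ring

lemma sinCosMoment_four_four : sinCosMoment 4 4 = 3 * π / 128 := by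
  rw [sinCosMoment_add_two, sinCosMoment_four_two, sinCosMoment_add_two, sinCosMoment_six_zero,
    sinCosMoment_eight_zero]
  ring

lemma integral_integral_sq (a b : ℝ) :
    (∫ x in (0:ℝ)..π, ∫ y in (0:ℝ)..π, (a * sin x * sin (2*y) + b * sin (2*x) * sin y) ^ 2)
      = π ^ 2 / 4 * (a ^ 2 + b ^ 2) := by
  rw [integral_integral_pow_eq_sum]
  simp only [sum_range_succ, range_one, sum_singleton, Nat.choose, tsub_zero, tsub_self,
    Nat.add_one_sub_one, sinCosMoment_of_odd _ odd_one, sinCosMoment_two_zero, sinCosMoment_two_two]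
  ring

lemma integral_integral_pow_four (a b : ℝ) :
    (∫ x in (0:ℝ)..π, ∫ y in (0:ℝ)..π, (a * sin x * sin (2*y) + b * sin (2*x) * sin y) ^ 4)
      = π ^ 2 * (9 / 64 * (a ^ 4 + b ^ 4) + 3 / 8 * a ^ 2 * b ^ 2) := by
  rw [integral_integral_pow_eq_sum]
  simp only [sum_range_succ, range_one, sum_singleton, Nat.choose, tsub_zero, tsub_self,
    Nat.add_one_sub_one, Nat.reduceSub, sinCosMoment_of_odd _ odd_one,
    sinCosMoment_of_odd _ (by decide : Odd 3), sinCosMoment_four_zero, sinCosMoment_four_two,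
    sinCosMoment_four_four]
  ring

lemma cos_four_mul (α : ℝ) : cos (4 * α) = 1 - 8 * (sin α * cos α) ^ 2 := by
  rw [show 4 * α = 2 * (2 * α) by ring, cos_two_mul, cos_sq', sin_two_mul]; ring

lemma sigmaRatio_eq (α : ℝ) : sigmaRatio α = 3 / 64 * (13 - cos (4 * α)) := by
  have hpy := sin_sq_add_cos_sq α
  rw [sigmaRatio, integral_integral_pow_four, integral_integral_sq, cos_four_mul, cos_sq_add_sin_sq,
    div_eq_iff (by positivity)]
  linear_combination π ^ 2 * (9 / 64) * (sin α ^ 2 + cos α ^ 2 + 1) * hpy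

lemma forall_sigmaRatio_le_iff (α : ℝ) :
    (∀ β, sigmaRatio α ≤ sigmaRatio β) ↔ cos (4 * α) = 1 := by
  simp only [sigmaRatio_eq]
  refine ⟨fun h => le_antisymm (cos_le_one _) ?_, fun h β => ?_⟩
  · have h0 := h 0
    rw [mul_zero, cos_zero] at h0
    linarith
  · linarith [cos_le_one (4 * β)]

theorem sigma_ratio_values :
    (∀ α : ℝ, sigmaRatio α = (3/64) * (13 - cos (4*α)))
    ∧ sigmaRatio 0 = 9/16 ∧ sigmaRatio (π/2) = 9/16
    ∧ sigmaRatio (π/4) = 21/32 ∧ sigmaRatio (3*π/4) = 21/32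
    ∧ (∀ α : ℝ, ((∀ β : ℝ, sigmaRatio α ≤ sigmaRatio β)
        ↔ ∃ k : ℤ, α = k * (π/2))) := by
  refine ⟨sigmaRatio_eq, ?_, ?_, ?_, ?_, fun α => ?_⟩
  · norm_num [sigmaRatio_eq]
  · rw [sigmaRatio_eq, show 4 * (π / 2) = 2 * π by ring, cos_two_pi]; norm_num
  · rw [sigmaRatio_eq, show 4 * (π / 4) = π by ring, cos_pi]; norm_num
  · rw [sigmaRatio_eq, show 4 * (3 * π / 4) = π + 2 * π by ring, cos_add_two_pi, cos_pi]; norm_num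
  · rw [forall_sigmaRatio_le_iff, cos_eq_one_iff]
    exact exists_congr fun k => by constructor <;> intro h <;> linarith
end
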